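/- Let K be a number field, m a positive integer, γ ∈ K*, and L = K(γ^{1/m}) for some m-th root γ^{1/m} of γ. Let p be a nonzero prime ideal of O_K with ord_p(m) = 0 and ord_p(γ) ≡ 0 (mod m). Then L/K is unramified at p, i.e. ord_p(d_{L/K}) = 0. -/

import Mathlib

open Polynomial NumberField IsDedekindDomain
open scoped nonZeroDivisors Classical

noncomputable section

namespace Paper

variable (F : Type*) [Field F] [NumberField F]

/-- The finite places (prime ideals) of a number field. -/
abbrev FinPlace := IsDedekindDomain.HeightOneSpectrum (𝓞 F)

/-- The set of places of a number field: infinite places plus finite places. -/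
abbrev Place := NumberField.InfinitePlace F ⊕ FinPlace F

/-- The absolute norm of a finite place. -/
def finNorm (v : FinPlace F) : ℕ := Ideal.absNorm v.asIdeal

variable {F} in
/-- `ord_p(x)` for `x ∈ F`, with junk value `0` at `x = 0`. -/
def finOrd (v : FinPlace F) (x : F) : ℤ :=
  if hx : x = 0 then 0
  else - Multiplicative.toAdd (WithZero.unzero (((v.valuation F).ne_zero_iff).mpr hx))

variable {F} in
/-- The normalized absolute value attached to a place. -/
def placeAbs : Place F → F → ℝ
  | Sum.inl w, x => (w x) ^ w.mult
  | Sum.inr v, x => if x = 0 then 0 else (finNorm F v : ℝ) ^ (-(finOrd v x))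

variable {F} in
/-- The absolute logarithmic (Weil) height of an element of a number field. -/
def logHeight (x : F) : ℝ :=
  (Module.finrank ℚ F : ℝ)⁻¹ * ∑ᶠ v : Place F, Real.log (max 1 (placeAbs v x))

variable {F} in
/-- The logarithmic height of a finite family. -/
def famHeight {ι : Type*} [Fintype ι] (u : ι → F) : ℝ :=
  (Module.finrank ℚ F : ℝ)⁻¹ *
    ∑ᶠ v : Place F, Real.log (max 1 (⨆ i, placeAbs v (u i)))

variable {F} in
/-- The logarithmic height of a polynomial. -/
def polyHeight (f : F[X]) : ℝ :=
  famHeight (fun i : Fin (f.natDegree + 1) => f.coeff i)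

variable {F} in
/-- The discriminant of a polynomial, computed in the algebraic closure:
`D(f) = (-1)^(n(n-1)/2) a₀^(n-2) ∏ᵢ f'(αᵢ)`. -/
def polyDiscA (f : F[X]) : AlgebraicClosure F :=
  (-1) ^ (f.natDegree * (f.natDegree - 1) / 2) *
    algebraMap F (AlgebraicClosure F) f.leadingCoeff ^ (f.natDegree - 2) *
    ((f.aroots (AlgebraicClosure F)).map fun r => Polynomial.aeval r (derivative f)).prod

variable {F} in
/-- The discriminant of a polynomial, as an element of the base field. -/
def polyDisc (f : F[X]) : F :=
  if h : ∃ c : F, algebraMap F (AlgebraicClosure F) c = polyDiscA f then h.choose else 0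

/-- `|D_F|`, the absolute value of the discriminant, as a real number. -/
def absDisc : ℝ := |(NumberField.discr F : ℝ)|

variable {F} in
/-- `Q_S`: product of the norms of the prime ideals in `S`. -/
def QS (T : Finset (FinPlace F)) : ℕ := ∏ v ∈ T, finNorm F v

variable {F} in
/-- `P_S`: maximum of the norms of the prime ideals in `S` (`1` if there are none). -/
def PS (T : Finset (FinPlace F)) : ℕ := max 1 (T.sup (finNorm F))

variable {F} in
/-- `s = #S`: the number of infinite places plus the number of primes in `S`. -/
def sCard (T : Finset (FinPlace F)) : ℕ := Fintype.card (NumberField.InfinitePlace F) + T.card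

variable {F} in
/-- The order of the subgroup of the class group generated by the classes of primes in `S`. -/
def hS (T : Finset (FinPlace F)) : ℕ :=
  Nat.card (Subgroup.closure
    {c : ClassGroup (𝓞 F) | ∃ v ∈ T,
      c = ClassGroup.mk0 ⟨v.asIdeal, mem_nonZeroDivisors_of_ne_zero v.ne_bot⟩})

variable {F} in
/-- The `S`-regulator `R_S = h_S · R_K · ∏ log N(p)`. -/
def RS (T : Finset (FinPlace F)) : ℝ :=
  (hS T : ℝ) * NumberField.Units.regulator F * ∏ v ∈ T, Real.log (finNorm F v)

/-- `log* x = max (1, log x)`. -/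
def logStar (x : ℝ) : ℝ := max 1 (Real.log x)

variable (L : Type*) [Field L] [NumberField L] [Algebra F L]

/-- The relative discriminant ideal of an extension of number fields: the ideal of `O_K`
generated by the discriminants of all `[L:K]`-tuples of integers of `L`. -/
def relDiscr : Ideal (𝓞 F) :=
  Ideal.span {x : 𝓞 F | ∃ ω : Fin (Module.finrank F L) → 𝓞 L,
    algebraMap (𝓞 F) F x = Algebra.discr F fun i => (algebraMap (𝓞 L) L (ω i))}

variable {F L} in
/-- A prime of `L` lies above a prime of `K`. -/
def LiesAbove (w : FinPlace L) (v : FinPlace F) : Prop :=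
  v.asIdeal = Ideal.comap (algebraMap (𝓞 F) (𝓞 L)) w.asIdeal

variable {F} in
/-- `ord_p(I)` of a nonzero ideal: the exponent of `p` in the prime factorization. -/
def ordIdl (v : FinPlace F) (I : Ideal (𝓞 F)) : ℕ :=
  Multiset.count v.asIdeal (UniqueFactorizationMonoid.normalizedFactors I)

/-- `u(n) = lcm(1, …, n)`. -/
def un (n : ℕ) : ℕ := (Finset.Icc 1 n).lcm id

end Paper

open Paper Polynomial NumberField IntermediateField
open scoped Classical

noncomputable section

/-! Since `m ∣ ord_p γ`, rescaling `t` by some `c ∈ K*` gives a generator `β = c t ∈ 𝓞 L` of `L/K`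
with `β ^ m = δ ∈ 𝓞 K` a unit at `p`. The discriminant of the power basis of `β` is, up to sign,
`N(f'(β))` for `f` the minimal polynomial of `β`, and `f ∣ X ^ m - δ` makes `f'(β)` divide
`m β ^ (m - 1)`. So `N(f'(β))` divides `m ^ n N(β) ^ (m - 1)`, which lies outside `p` because
`N(β) ^ m = δ ^ n`. -/

namespace Paper

open UniqueFactorizationMonoid

variable {K : Type*} [Field K] [NumberField K] (v : FinPlace K)

theorem finOrd_eq_neg_log_valuation (x : K) :
    finOrd v x = -WithZero.log (v.valuation K x) := by
  by_cases hx : x = 0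
  · simp [finOrd, hx]
  · rw [finOrd, dif_neg hx, WithZero.toAdd_unzero_eq_log]

theorem ordIdl_eq_zero_of_not_le {I : Ideal (𝓞 K)} (h : ¬I ≤ v.asIdeal) : ordIdl v I = 0 :=
  Multiset.count_eq_zero.mpr fun hv => h (Ideal.le_of_dvd (dvd_of_mem_normalizedFactors hv))

theorem not_le_of_ordIdl_eq_zero {I : Ideal (𝓞 K)} (hI : I ≠ ⊥) (h : ordIdl v I = 0) :
    ¬I ≤ v.asIdeal := fun hle =>
  Multiset.count_eq_zero.mp h ((Ideal.mem_normalizedFactors_iff hI).mpr ⟨v.isPrime, hle⟩)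

end Paper

namespace IsDedekindDomain.HeightOneSpectrum

variable {R : Type*} [CommRing R] [IsDedekindDomain R] {K : Type*} [Field K] [Algebra R K]
  [IsFractionRing R K] (v : HeightOneSpectrum R)

theorem exists_mul_pow_eq_algebraMap_notMem {γ : K} (hγ : γ ≠ 0) {m : ℕ} (hm : m ≠ 0)
    (hvγ : (m : ℤ) ∣ WithZero.log (v.valuation K γ)) :
    ∃ c : K, c ≠ 0 ∧ ∃ δ : R, δ ∉ v.asIdeal ∧ algebraMap R K δ = c ^ m * γ := by
  obtain ⟨k, hk⟩ := hvγ
  obtain ⟨π, hπ⟩ := v.valuation_exists_uniformizer K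
  have hπ0 : π ≠ 0 := (Valuation.ne_zero_iff _).mp (hπ ▸ WithZero.exp_ne_zero)
  have hγv : v.valuation K γ = WithZero.exp (m * k) := by
    rw [← hk, WithZero.exp_log ((Valuation.ne_zero_iff _).mpr hγ)]
  set x := (π ^ k) ^ m * γ
  have hx : v.valuation K x = 1 := by
    simp only [x, map_mul, map_pow, map_zpow₀, hπ, hγv, ← WithZero.exp_zsmul,
      ← WithZero.exp_nsmul, ← WithZero.exp_add, ← WithZero.exp_zero, nsmul_eq_mul, smul_eq_mul]
    ring_nf
  obtain ⟨n, d, hnd⟩ := v.exists_primeCompl_mul_eq_of_integer x hx.le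
  have hd : v.valuation K (algebraMap R K d) = 1 := v.valuation_eq_one_iff_notMem.mpr d.prop
  have hδ : algebraMap R K (d ^ (m - 1) * n) = algebraMap R K d ^ m * x := by
    rw [map_mul, map_pow, ← hnd, mul_left_comm, pow_sub_one_mul hm, mul_comm]
  refine ⟨algebraMap R K d * π ^ k, mul_ne_zero ?_ (zpow_ne_zero k hπ0), _, ?_, hδ.trans (by ring)⟩
  · exact (Valuation.ne_zero_iff _).mp (hd ▸ one_ne_zero)
  · rw [← v.valuation_eq_one_iff_notMem (K := K), hδ, map_mul, map_pow, hd, hx, one_pow, one_mul]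

end IsDedekindDomain.HeightOneSpectrum

theorem Polynomial.aeval_derivative_dvd_of_dvd {R S : Type*} [CommRing R] [CommRing S]
    [Algebra R S] {f p : R[X]} {x : S} (hfp : f ∣ p) (hx : aeval x f = 0) :
    aeval x (derivative f) ∣ aeval x (derivative p) := by
  obtain ⟨g, rfl⟩ := hfp
  exact ⟨aeval x g, by simp [derivative_mul, hx]⟩

theorem IntermediateField.adjoin_simple_algebraMap_mul {F E : Type*} [Field F] [Field E]
    [Algebra F E] {c : F} (hc : c ≠ 0) (x : E) : F⟮algebraMap F E c * x⟯ = F⟮x⟯ := by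
  refine le_antisymm (adjoin_simple_le_iff.mpr ?_) (adjoin_simple_le_iff.mpr ?_)
  · exact mul_mem (algebraMap_mem _ c) (mem_adjoin_simple_self F x)
  · have hx : algebraMap F E c⁻¹ * (algebraMap F E c * x) = x := by
      rw [map_inv₀, inv_mul_cancel_left₀ ((_root_.map_ne_zero _).mpr hc)]
    have := mul_mem (algebraMap_mem F⟮algebraMap F E c * x⟯ c⁻¹)
      (mem_adjoin_simple_self F (algebraMap F E c * x))
    rwa [hx] at this

namespace NumberField.RingOfIntegers

variable {K L : Type*} [Field K] [Field L] [Algebra K L]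

theorem exists_pow_eq_algebraMap_of_adjoin_eq_top {m : ℕ} (hm : m ≠ 0) {t : L} {γ : K}
    (ht : t ^ m = algebraMap K L γ) (hgen : K⟮t⟯ = ⊤) {c : K} (hc : c ≠ 0) {δ : 𝓞 K}
    (hδ : algebraMap (𝓞 K) K δ = c ^ m * γ) :
    ∃ β : 𝓞 L, β ^ m = algebraMap (𝓞 K) (𝓞 L) δ ∧ K⟮(β : L)⟯ = ⊤ := by
  have hβ : (algebraMap K L c * t) ^ m = algebraMap (𝓞 K) L δ := by
    rw [mul_pow, ← map_pow, ht, ← map_mul, IsScalarTower.algebraMap_apply (𝓞 K) K L, hδ]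
  have hint : IsIntegral ℤ (algebraMap K L c * t) :=
    IsIntegral.of_pow (Nat.pos_of_ne_zero hm) (hβ ▸ (δ.2.map (IsScalarTower.toAlgHom ℤ K L)))
  exact ⟨⟨_, hint⟩, RingOfIntegers.ext hβ, adjoin_simple_algebraMap_mul hc t ▸ hgen⟩

variable [NumberField K]

theorem norm_aeval_derivative_minpoly_notMem {P : Ideal (𝓞 K)} [hP : P.IsPrime] {m : ℕ}
    (hm : m ≠ 0) {β : 𝓞 L} {δ : 𝓞 K} (hβ : β ^ m = algebraMap (𝓞 K) (𝓞 L) δ)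
    (hmP : (m : 𝓞 K) ∉ P) (hδP : δ ∉ P) :
    RingOfIntegers.norm K (aeval β (derivative (minpoly (𝓞 K) β))) ∉ P := by
  have hdvd : aeval β (derivative (minpoly (𝓞 K) β)) ∣ (m : 𝓞 L) * β ^ (m - 1) := by
    have := aeval_derivative_dvd_of_dvd (minpoly.isIntegrallyClosed_dvd
      (Algebra.IsIntegral.isIntegral β) (p := X ^ m - C δ) (by simp [hβ]))
      (minpoly.aeval (𝓞 K) β)
    simpa [derivative_X_pow] using this
  have hpow : RingOfIntegers.norm K β ^ m = δ ^ Module.finrank K L := by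
    rw [← map_pow, hβ, RingOfIntegers.norm_algebraMap]
  have hNβ : RingOfIntegers.norm K β ∉ P := fun h =>
    hδP (hP.mem_of_pow_mem _ (hpow ▸ P.pow_mem_of_mem h m (Nat.pos_of_ne_zero hm)))
  intro hmem
  have h := P.mem_of_dvd (map_dvd (RingOfIntegers.norm K) hdvd) hmem
  rw [map_mul, map_pow, ← map_natCast (algebraMap (𝓞 K) (𝓞 L)),
    RingOfIntegers.norm_algebraMap] at h
  rcases hP.mem_or_mem h with h | h
  · exact hmP (hP.mem_of_pow_mem _ h)
  · exact hNβ (hP.mem_of_pow_mem _ h)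

end NumberField.RingOfIntegers

namespace Paper

variable {K L : Type*} [Field K] [NumberField K] [Field L] [NumberField L] [Algebra K L]

theorem norm_aeval_derivative_minpoly_mem_relDiscr {β : 𝓞 L} (hgen : K⟮(β : L)⟯ = ⊤) :
    RingOfIntegers.norm K (aeval β (derivative (minpoly (𝓞 K) β))) ∈ relDiscr K L := by
  have hint : IsIntegral K (β : L) := .of_finite K _
  let pb := PowerBasis.ofAdjoinEqTop hint
    ((adjoin_simple_eq_top_iff_of_isAlgebraic hint.isAlgebraic).mp hgen)
  have hminpoly : minpoly K (β : L) = (minpoly (𝓞 K) β).map (algebraMap (𝓞 K) K) := by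
    rw [minpoly.isIntegrallyClosed_eq_field_fractions' K
      (Algebra.IsIntegral.isIntegral (R := 𝓞 K) β).algebraMap,
      minpoly.algebraMap_eq RingOfIntegers.coe_injective]
  have hdiscr := Algebra.discr_powerBasis_eq_norm (pb := pb)
  rw [PowerBasis.coe_basis, PowerBasis.ofAdjoinEqTop_gen, hminpoly, derivative_map,
    aeval_map_algebraMap, pb.finrank] at hdiscr
  refine (Ideal.unit_mul_mem_iff_mem _ (isUnit_neg_one.pow (pb.dim * (pb.dim - 1) / 2))).mp ?_
  rw [relDiscr, pb.finrank]
  refine Ideal.subset_span ⟨fun i => β ^ (i : ℕ), ?_⟩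
  simp only [map_pow, map_mul, map_neg, map_one, ← RingOfIntegers.coe_eq_algebraMap,
    RingOfIntegers.coe_norm, RingOfIntegers.coe_eq_algebraMap (aeval β _),
    ← aeval_algebraMap_apply]
  exact hdiscr.symm

end Paper

/-- Lemma 3.4: if `L = K(γ^{1/m})`, `p ∤ m`, and `ord_p(γ) ≡ 0 (mod m)`, then `L/K` is
unramified at `p`, i.e. `ord_p(d_{L/K}) = 0`. -/
theorem relDiscr_unramified_of_radical
    (K L : Type*) [Field K] [NumberField K] [Field L] [NumberField L] [Algebra K L]
    (m : ℕ) (hm : 0 < m)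
    (γ : K) (hγ : γ ≠ 0)
    (t : L) (ht : t ^ m = algebraMap K L γ)
    (hgen : IntermediateField.adjoin K {t} = ⊤)
    (v : FinPlace K)
    (hvm : ordIdl v (Ideal.span {(m : 𝓞 K)}) = 0)
    (hvγ : (m : ℤ) ∣ finOrd v γ) :
    ordIdl v (relDiscr K L) = 0 := by
  have hm0 : m ≠ 0 := hm.ne'
  have hmv : (m : 𝓞 K) ∉ v.asIdeal := fun h => not_le_of_ordIdl_eq_zero v
    (by simpa using hm0) hvm ((Ideal.span_singleton_le_iff_mem _).mpr h)
  obtain ⟨c, hc, δ, hδv, hδ⟩ := v.exists_mul_pow_eq_algebraMap_notMem hγ hm0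
    (by rwa [finOrd_eq_neg_log_valuation, dvd_neg] at hvγ)
  obtain ⟨β, hβ, hβgen⟩ :=
    RingOfIntegers.exists_pow_eq_algebraMap_of_adjoin_eq_top hm0 ht hgen hc hδ
  exact ordIdl_eq_zero_of_not_le v fun hle =>
    RingOfIntegers.norm_aeval_derivative_minpoly_notMem (P := v.asIdeal) hm0 hβ hmv hδv
      (hle (norm_aeval_derivative_minpoly_mem_relDiscr hβgen))
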